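/- Let Q(f) = ρ_f M_{Θ_f} − f where ρ_f = ∫ f dA, J_f = ∫ f(A) A dA, Θ_f is the special-orthogonal polar factor of J_f (assumed to have positive determinant), and M_Θ(A) = Z^{-1}exp(κ Θ·A). Then ∫_{SO(n,ℝ)} Q(f)(A)(AΘ_f^T − Θ_f A^T) dA = 0 for every integrable f : SO(n,ℝ) → ℝ with det J_f > 0. -/

import Mathlib

open MeasureTheory Matrix

noncomputable section

/-- A measurable space structure on matrices (the product σ-algebra on entries). -/
instance matMS (n : ℕ) : MeasurableSpace (Matrix (Fin n) (Fin n) ℝ) :=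
  (by infer_instance : MeasurableSpace (Fin n → Fin n → ℝ))

/-- The special orthogonal group `SO(n, ℝ)`, as the subgroup of the orthogonal group
consisting of matrices of determinant one. -/
def SOsub (n : ℕ) : Subgroup (Matrix.orthogonalGroup (Fin n) ℝ) where
  carrier := {A | (A : Matrix (Fin n) (Fin n) ℝ).det = 1}
  one_mem' := by simp
  mul_mem' := by
    intro a b ha hb
    simp only [Set.mem_setOf_eq, Submonoid.coe_mul, Matrix.det_mul] at *
    rw [ha, hb, mul_one]
  inv_mem' := by
    intro a ha
    simp only [Set.mem_setOf_eq] at *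
    have h : ((a⁻¹ : Matrix.orthogonalGroup (Fin n) ℝ) : Matrix (Fin n) (Fin n) ℝ)
        = star (a : Matrix (Fin n) (Fin n) ℝ) := rfl
    rw [h, Matrix.star_eq_conjTranspose, Matrix.det_conjTranspose, ha, star_one]

/-- Elements of `SO(n, ℝ)`. -/
abbrev SO (n : ℕ) := SOsub n

/-- The underlying matrix of an element of `SO(n, ℝ)`. -/
def mat {n : ℕ} (A : SO n) : Matrix (Fin n) (Fin n) ℝ :=
  ((A : Matrix.orthogonalGroup (Fin n) ℝ) : Matrix (Fin n) (Fin n) ℝ)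

/-! On the compact group `SO(n)` the Haar probability measure is also right- and
inversion-invariant. Substituting `A = BΘ` turns `∫ M_Θ(A) (AΘᵀ − ΘAᵀ) dA` into
`∫ exp(κ tr B) (B − Bᵀ) dB`, which vanishes because `B ↦ B⁻¹ = Bᵀ` preserves the weight and
flips the sign of `B − Bᵀ`. The `f`-term is linear: `∫ f(A) (AΘᵀ − ΘAᵀ) dA = J_f Θᵀ − Θ J_fᵀ`,
which is zero because `J_f Θᵀ` is symmetric. -/

namespace MeasureTheory.Measure

variable {G : Type*} [Group G] [TopologicalSpace G] [IsTopologicalGroup G] [LocallyCompactSpace G]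
  [MeasurableSpace G] [BorelSpace G] (μ : Measure G) [IsProbabilityMeasure μ] [μ.IsHaarMeasure]

theorem isMulRightInvariant_of_isProbabilityMeasure : μ.IsMulRightInvariant where
  map_mul_right_eq_self g := by
    have : IsProbabilityMeasure (μ.map (· * g)) :=
      isProbabilityMeasure_map (measurable_mul_const g).aemeasurable
    exact isHaarMeasure_eq_of_isProbabilityMeasure _ μ

theorem isInvInvariant_of_isProbabilityMeasure : μ.IsInvInvariant where
  inv_eq_self := by
    have := isMulRightInvariant_of_isProbabilityMeasure μ
    have : IsProbabilityMeasure μ.inv := isProbabilityMeasure_map measurable_inv.aemeasurable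
    have : μ.inv.IsHaarMeasure := { }
    exact isHaarMeasure_eq_of_isProbabilityMeasure _ μ

end MeasureTheory.Measure

theorem MeasureTheory.integral_eq_zero_of_comp_inv_eq_neg {G : Type*} [Group G]
    [MeasurableSpace G] [MeasurableInv G] (μ : Measure G) [μ.IsInvInvariant] {g : G → ℝ}
    (hg : ∀ x, g x⁻¹ = -g x) : ∫ x, g x ∂μ = 0 := by
  have h := integral_inv_eq_self g μ
  simp only [hg, integral_neg] at h
  linarith

theorem MeasureTheory.Integrable.mul_continuous_of_compactSpace {X : Type*} [TopologicalSpace X]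
    [CompactSpace X] [MeasurableSpace X] [OpensMeasurableSpace X] {μ : Measure X} {f g : X → ℝ}
    (hf : Integrable f μ) (hg : Continuous g) : Integrable (fun x => f x * g x) μ := by
  obtain ⟨C, hC⟩ := isCompact_univ.exists_bound_of_continuousOn hg.continuousOn
  exact hf.mul_bdd hg.aestronglyMeasurable (ae_of_all _ fun x => hC x (Set.mem_univ x))

theorem Matrix.isCompact_unitaryGroup (ι 𝕜 : Type*) [Fintype ι] [DecidableEq ι] [RCLike 𝕜] :
    IsCompact (unitaryGroup ι 𝕜 : Set (Matrix ι ι 𝕜)) := by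
  refine (isCompact_univ_pi fun _ => isCompact_univ_pi fun _ => isCompact_closedBall (0 : 𝕜) 1)
    |>.of_isClosed_subset (isClosed_unitary (R := Matrix ι ι 𝕜)) fun U hU i _ j _ => ?_
  simpa using entry_norm_bound_of_unitary hU i j

instance (ι 𝕜 : Type*) [Fintype ι] [DecidableEq ι] [RCLike 𝕜] :
    CompactSpace (unitaryGroup ι 𝕜) :=
  isCompact_iff_compactSpace.mp (isCompact_unitaryGroup ι 𝕜)

instance (n : ℕ) : BorelSpace (Matrix (Fin n) (Fin n) ℝ) := Pi.borelSpace

theorem isClosed_SOsub (n : ℕ) : IsClosed (SOsub n : Set (orthogonalGroup (Fin n) ℝ)) :=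
  isClosed_eq continuous_subtype_val.matrix_det continuous_const

instance (n : ℕ) : CompactSpace (SO n) :=
  isCompact_iff_compactSpace.mp (isClosed_SOsub n).isCompact

@[fun_prop]
theorem continuous_mat (n : ℕ) : Continuous (mat (n := n)) :=
  continuous_subtype_val.comp continuous_subtype_val

theorem mat_mul {n : ℕ} (A B : SO n) : mat (A * B) = mat A * mat B := rfl

theorem mat_inv {n : ℕ} (A : SO n) : mat A⁻¹ = (mat A)ᵀ := rfl

theorem mat_mul_transpose_self {n : ℕ} (A : SO n) : mat A * (mat A)ᵀ = 1 :=
  (mem_orthogonalGroup_iff (Fin n) ℝ).mp A.1.2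

section Integrals

variable {n : ℕ} (μ : Measure (SO n))

theorem integral_exp_trace_mul_sub_transpose_apply [μ.IsInvInvariant] (κ : ℝ) (i j : Fin n) :
    ∫ B, Real.exp (κ * (mat B).trace) * (mat B - (mat B)ᵀ) i j ∂μ = 0 :=
  integral_eq_zero_of_comp_inv_eq_neg μ fun B => by
    rw [mat_inv, trace_transpose, transpose_transpose, ← neg_sub, neg_apply, mul_neg]

theorem integral_exp_trace_mul_skew_apply [μ.IsMulRightInvariant] [μ.IsInvInvariant] (κ : ℝ)
    (Θ : SO n) (i j : Fin n) :
    ∫ A, Real.exp (κ * ((mat Θ)ᵀ * mat A).trace) *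
      (mat A * (mat Θ)ᵀ - mat Θ * (mat A)ᵀ) i j ∂μ = 0 := by
  rw [← integral_mul_right_eq_self _ Θ]
  convert integral_exp_trace_mul_sub_transpose_apply μ κ i j using 5 with B
  · rw [mat_mul, trace_mul_comm, mul_assoc, mat_mul_transpose_self, mul_one]
  · rw [mat_mul, mul_assoc, mat_mul_transpose_self, mul_one]
  · rw [mat_mul, transpose_mul, ← mul_assoc, mat_mul_transpose_self, one_mul]

variable {μ} {f : SO n → ℝ} {J : Matrix (Fin n) (Fin n) ℝ}

theorem integral_mul_mat_mul_apply (hf : Integrable f μ)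
    (hJ : ∀ i j, J i j = ∫ A, f A * mat A i j ∂μ) (M : Matrix (Fin n) (Fin n) ℝ) (i j : Fin n) :
    ∫ A, f A * (mat A * M) i j ∂μ = (J * M) i j := by
  simp only [mul_apply, Finset.mul_sum, hJ, ← integral_mul_const, mul_assoc]
  exact integral_finsetSum _ fun k _ => hf.mul_continuous_of_compactSpace (by fun_prop)

theorem integral_mul_mul_transpose_mat_apply (hf : Integrable f μ)
    (hJ : ∀ i j, J i j = ∫ A, f A * mat A i j ∂μ) (M : Matrix (Fin n) (Fin n) ℝ) (i j : Fin n) :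
    ∫ A, f A * (M * (mat A)ᵀ) i j ∂μ = (M * Jᵀ) i j := by
  have hswap : ∀ N : Matrix (Fin n) (Fin n) ℝ, (M * Nᵀ) i j = (N * Mᵀ) j i := fun N => by
    rw [← transpose_apply (N * Mᵀ), transpose_mul, transpose_transpose]
  simp only [hswap]
  exact integral_mul_mat_mul_apply hf hJ Mᵀ j i

theorem integral_mul_skew_apply (hf : Integrable f μ)
    (hJ : ∀ i j, J i j = ∫ A, f A * mat A i j ∂μ) (M : Matrix (Fin n) (Fin n) ℝ) (i j : Fin n) :
    ∫ A, f A * (mat A * Mᵀ - M * (mat A)ᵀ) i j ∂μ = (J * Mᵀ - M * Jᵀ) i j := by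
  simp only [Matrix.sub_apply, mul_sub]
  rw [integral_sub (hf.mul_continuous_of_compactSpace (by fun_prop))
    (hf.mul_continuous_of_compactSpace (by fun_prop)), integral_mul_mat_mul_apply hf hJ,
    integral_mul_mul_transpose_mat_apply hf hJ]

end Integrals

theorem stmt_19_general (n : ℕ) (κ : ℝ)
    (μ : Measure (SO n)) [IsProbabilityMeasure μ] [μ.IsHaarMeasure]
    (f : SO n → ℝ) (hf : Integrable f μ)
    (Jf : Matrix (Fin n) (Fin n) ℝ)
    (hJf : ∀ i j, Jf i j = ∫ A, f A * mat A i j ∂μ)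
    (Θf : SO n)
    (hpolar : (Jf * (mat Θf)ᵀ)ᵀ = Jf * (mat Θf)ᵀ) :
    ∀ i j,
      ∫ A, ((∫ B, f B ∂μ) *
            (Real.exp (κ * ((mat Θf)ᵀ * mat A).trace) /
              ∫ B, Real.exp (κ * (mat B).trace) ∂μ) - f A) *
          ((mat A * (mat Θf)ᵀ - mat Θf * (mat A)ᵀ) i j) ∂μ = 0 := by
  intro i j
  have := μ.isMulRightInvariant_of_isProbabilityMeasure
  have := μ.isInvInvariant_of_isProbabilityMeasure
  set X : SO n → ℝ := fun A => (mat A * (mat Θf)ᵀ - mat Θf * (mat A)ᵀ) i j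
  set M : SO n → ℝ := fun A => Real.exp (κ * ((mat Θf)ᵀ * mat A).trace)
  have hM : Integrable (fun A => M A * X A) μ :=
    Continuous.integrable_of_hasCompactSupport (by fun_prop) (.of_compactSpace _)
  have hX : Integrable (fun A => f A * X A) μ := hf.mul_continuous_of_compactSpace (by fun_prop)
  have hJsymm : mat Θf * Jfᵀ = Jf * (mat Θf)ᵀ := by
    rw [← hpolar, transpose_mul, transpose_transpose]
  calc ∫ A, ((∫ B, f B ∂μ) * (M A / ∫ B, Real.exp (κ * (mat B).trace) ∂μ) - f A) * X A ∂μ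
      = (∫ B, f B ∂μ) / (∫ B, Real.exp (κ * (mat B).trace) ∂μ) * ∫ A, M A * X A ∂μ
          - ∫ A, f A * X A ∂μ := by
        rw [← integral_const_mul, ← integral_sub (hM.const_mul _) hX]
        congr 1 with A
        ring
    _ = 0 := by
        rw [integral_exp_trace_mul_skew_apply, integral_mul_skew_apply hf hJf, hJsymm,
          Matrix.sub_apply, sub_self, mul_zero, sub_zero]

/-- Generalized collision invariance for the BGK operator `Q(f) = ρ_f M_{Θ_f} − f`:
`∫ Q(f)(A) (A Θ_fᵀ − Θ_f Aᵀ) dA = 0` whenever `Θ_f` is the special-orthogonal polar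
factor of `J_f = ∫ f(A) A dA` (so `J_f Θ_fᵀ` is symmetric) and `det J_f > 0`.
Here `M_Θ(A) = Z⁻¹ exp(κ Tr(Θᵀ A))` with `Z = ∫ exp(κ Tr A) dA`, `ρ_f = ∫ f dA`,
and the matrix-valued identity is stated entrywise. -/
theorem stmt_19 (n : ℕ) (hn : 3 ≤ n) (κ : ℝ) (hκ : 0 < κ)
    (μ : Measure (SO n)) [IsProbabilityMeasure μ] [μ.IsHaarMeasure]
    (f : SO n → ℝ) (hf : Integrable f μ)
    (Jf : Matrix (Fin n) (Fin n) ℝ)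
    (hJf : ∀ i j, Jf i j = ∫ A, f A * mat A i j ∂μ)
    (hdet : 0 < Jf.det)
    (Θf : SO n)
    (hpolar : (Jf * (mat Θf)ᵀ)ᵀ = Jf * (mat Θf)ᵀ) :
    ∀ i j,
      ∫ A, ((∫ B, f B ∂μ) *
            (Real.exp (κ * ((mat Θf)ᵀ * mat A).trace) /
              ∫ B, Real.exp (κ * (mat B).trace) ∂μ) - f A) *
          ((mat A * (mat Θf)ᵀ - mat Θf * (mat A)ᵀ) i j) ∂μ = 0 :=
  stmt_19_general n κ μ f hf Jf hJf Θf hpolar
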